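/- Let H be a complex Hilbert space, Π an orthogonal projection on H, and χ, η bounded self-adjoint operators on H with χ² + η² ≤ 1 in the Loewner order. Define X = ΠχΠ + (1−Π)χ(1−Π) and Y = ΠηΠ + (1−Π)η(1−Π). Then X² + Y² ≤ 1 in the Loewner order. -/

import Mathlib

/-!
Compressing by a projection `p` can only shrink squares:
`(p a p)² = (a p)* p (a p) ≤ (a p)* (a p) = p a² p` since `p ≤ 1`. The cross terms of
`(p a p + q a q)²` vanish for `q = 1 - p`, so `X² ≤ p χ² p + q χ² q`, and likewise for `Y`;
adding, `X² + Y² ≤ p (χ² + η²) p + q (χ² + η²) q ≤ p + q = 1`. Only the star-ordered ring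
structure of the operator algebra enters.
-/

open scoped ComplexOrder

/-- The Loewner order on bounded operators on a complex Hilbert space:
`A ≤ B` iff `⟨x, (B - A) x⟩ ≥ 0` for all `x`. -/
def LoewnerLE {H : Type*} [NormedAddCommGroup H] [InnerProductSpace ℂ H]
    (A B : H →L[ℂ] H) : Prop :=
  ∀ x : H, (0 : ℂ) ≤ (inner ℂ x ((B - A) x) : ℂ)

section Ring

variable {R : Type*} [Ring R] {p a b : R}

def localization (p a : R) : R := p * a * p + (1 - p) * a * (1 - p)

lemma localization_add (p a b : R) :
    localization p (a + b) = localization p a + localization p b := by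
  simp only [localization, mul_add, add_mul]; abel

lemma IsIdempotentElem.localization_one (hp : IsIdempotentElem p) : localization p 1 = 1 := by
  simp only [localization, mul_one, hp.eq, hp.one_sub.eq, add_sub_cancel]

variable [PartialOrder R] [StarRing R] [StarOrderedRing R]

lemma IsSelfAdjoint.localization_mono (hp : IsSelfAdjoint p) (hab : a ≤ b) :
    localization p a ≤ localization p b :=
  add_le_add (hp.conjugate_le_conjugate hab) (((IsSelfAdjoint.one R).sub hp).conjugate_le_conjugate hab)

lemma IsStarProjection.compression_mul_self_le (hp : IsStarProjection p) (ha : IsSelfAdjoint a) :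
    p * a * p * (p * a * p) ≤ p * (a * a) * p := by
  have hstar : star (a * p) = p * a := by
    rw [star_mul, hp.isSelfAdjoint.star_eq, ha.star_eq]
  have hpp (x : R) : p * (p * x) = p * x := by rw [← mul_assoc, hp.isIdempotentElem.eq]
  calc p * a * p * (p * a * p) = star (a * p) * p * (a * p) := by
        simp only [hstar, mul_assoc, hpp]
    _ ≤ star (a * p) * 1 * (a * p) := star_left_conjugate_le_conjugate hp.le_one _
    _ = p * (a * a) * p := by simp only [hstar, mul_one, mul_assoc]

lemma IsStarProjection.localization_mul_self_le (hp : IsStarProjection p) (ha : IsSelfAdjoint a) :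
    localization p a * localization p a ≤ localization p (a * a) := by
  have hpq (x : R) : p * ((1 - p) * x) = 0 := by rw [← mul_assoc, hp.mul_one_sub_self, zero_mul]
  have hqp (x : R) : (1 - p) * (p * x) = 0 := by rw [← mul_assoc, hp.one_sub_mul_self, zero_mul]
  have hsplit : localization p a * localization p a
      = p * a * p * (p * a * p) + (1 - p) * a * (1 - p) * ((1 - p) * a * (1 - p)) := by
    simp only [localization, add_mul, mul_add, mul_assoc, hpq, hqp, mul_zero, add_zero, zero_add]
  rw [hsplit]
  exact add_le_add (hp.compression_mul_self_le ha) (hp.one_sub.compression_mul_self_le ha)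

theorem IsStarProjection.localization_mul_self_add_mul_self_le_one (hp : IsStarProjection p)
    (ha : IsSelfAdjoint a) (hb : IsSelfAdjoint b) (h : a * a + b * b ≤ 1) :
    localization p a * localization p a + localization p b * localization p b ≤ 1 :=
  calc _ ≤ localization p (a * a) + localization p (b * b) :=
        add_le_add (hp.localization_mul_self_le ha) (hp.localization_mul_self_le hb)
    _ = localization p (a * a + b * b) := (localization_add p _ _).symm
    _ ≤ localization p 1 := hp.isSelfAdjoint.localization_mono h
    _ = 1 := hp.isIdempotentElem.localization_one

end Ring

lemma loewnerLE_iff_le {H : Type*} [NormedAddCommGroup H] [InnerProductSpace ℂ H]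
    (A B : H →L[ℂ] H) : LoewnerLE A B ↔ A ≤ B := by
  rw [ContinuousLinearMap.le_def, ContinuousLinearMap.isPositive_iff_complex, LoewnerLE]
  refine forall_congr' fun x => ?_
  rw [← inner_conj_symm x, starRingEnd_apply, star_nonneg_iff, Complex.nonneg_iff, Complex.ext_iff]
  simp [and_comm]

theorem stmt3 {H : Type*} [NormedAddCommGroup H] [InnerProductSpace ℂ H] [CompleteSpace H]
    (P : H →L[ℂ] H) (hP : IsSelfAdjoint P) (hP2 : P * P = P)
    (χ η : H →L[ℂ] H) (hχ : IsSelfAdjoint χ) (hη : IsSelfAdjoint η)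
    (hχη : LoewnerLE (χ * χ + η * η) 1)
    (X Y : H →L[ℂ] H)
    (hX : X = P * χ * P + (1 - P) * χ * (1 - P))
    (hY : Y = P * η * P + (1 - P) * η * (1 - P)) :
    LoewnerLE (X * X + Y * Y) 1 := by
  have hproj : IsStarProjection P := ⟨hP2, hP⟩
  subst hX hY
  rw [loewnerLE_iff_le] at hχη ⊢
  exact hproj.localization_mul_self_add_mul_self_le_one hχ hη hχη
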